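/- arXiv:0911.2241 — 6 statements merged into one kernel-verified Lean document; each statement's English description precedes it below -/
import Mathlib

section
/- Let R > 0 and let f : [0,R] × (ℝ/2πℤ) → ℝ be continuously differentiable. For each c ∈ ℝ/2πℤ let γ_c : [0,1] → [0,R] × (ℝ/2πℤ) be the straight diagonal path γ_c(s) = (Rs, c − 4πs). Assume that for every c ∈ ℝ/2πℤ there exist s₁ < s₂ in [0,1] with |f(γ_c(s₂)) − f(γ_c(s₁))| ≥ 1. Then the Dirichlet energy of f satisfies ∫_{[0,R]×(ℝ/2πℤ)} ((∂f/∂t)² + (∂f/∂θ)²) dt dθ ≥ 2πR/(16π² + R²). -/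
open Real MeasureTheory intervalIntegral

/-! Along the diagonal path `γ_c` the chain rule and Cauchy–Schwarz give
`(d/ds f(γ_c(s)))² ≤ (16π² + R²) |∇f|²(γ_c(s))`, and a crossing of size `1` on a path
parametrised by `[0,1]` forces `∫₀¹ (d/ds f ∘ γ_c)² ≥ 1`. Hence every diagonal path carries
energy at least `(16π² + R²)⁻¹`. Averaging over `c ∈ [0, 2π]`, the sheared map
`(c, s) ↦ (R s, c − 4π s)` covers the cylinder uniformly with Jacobian `R`, so the average
equals `R⁻¹` times the Dirichlet energy. -/

theorem Function.Periodic.fderiv {𝕜 E F : Type*} [NontriviallyNormedField 𝕜]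
    [NormedAddCommGroup E] [NormedSpace 𝕜 E] [NormedAddCommGroup F] [NormedSpace 𝕜 F]
    {f : E → F} {v : E} (hf : Function.Periodic f v) : Function.Periodic (fderiv 𝕜 f) v :=
  fun x => by rw [← fderiv_comp_add_right, funext hf]

theorem sq_intervalIntegral_le_mul_integral_sq {h : ℝ → ℝ} {a b : ℝ} (hab : a ≤ b)
    (hh : IntervalIntegrable h volume a b)
    (hh2 : IntervalIntegrable (fun x => h x ^ 2) volume a b) :
    (∫ x in a..b, h x) ^ 2 ≤ (b - a) * ∫ x in a..b, h x ^ 2 := by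
  rcases hab.eq_or_lt with rfl | hlt
  · simp
  set I := ∫ x in a..b, h x
  set m := I / (b - a)
  -- integrate the tangent-line bound `2 m y - m² ≤ y²` at the mean value `m`
  have htangent : ∫ x in a..b, (2 * m * h x - m ^ 2) ≤ ∫ x in a..b, h x ^ 2 :=
    integral_mono_on hab ((hh.const_mul _).sub intervalIntegrable_const) hh2
      fun x _ => by nlinarith [sq_nonneg (h x - m)]
  rw [integral_sub (hh.const_mul _) intervalIntegrable_const, intervalIntegral.integral_const_mul,
    intervalIntegral.integral_const, smul_eq_mul] at htangent
  have hm : 2 * m * I - (b - a) * m ^ 2 = I ^ 2 / (b - a) := by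
    simp only [m]; field_simp; ring
  change 2 * m * I - (b - a) * m ^ 2 ≤ _ at htangent
  rw [hm, div_le_iff₀ (sub_pos.2 hlt)] at htangent
  linarith

theorem sq_sub_le_mul_integral_deriv_sq {g g' : ℝ → ℝ} (hg : ∀ s, HasDerivAt g (g' s) s)
    (hg' : Continuous g') {a b s₁ s₂ : ℝ} (ha : a ≤ s₁) (h12 : s₁ ≤ s₂) (hb : s₂ ≤ b) :
    (g s₂ - g s₁) ^ 2 ≤ (b - a) * ∫ s in a..b, g' s ^ 2 := by
  rw [← integral_eq_sub_of_hasDerivAt (fun s _ => hg s) (hg'.intervalIntegrable _ _)]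
  have hsq : Continuous fun s => g' s ^ 2 := hg'.pow 2
  calc (∫ s in s₁..s₂, g' s) ^ 2
      ≤ (s₂ - s₁) * ∫ s in s₁..s₂, g' s ^ 2 :=
        sq_intervalIntegral_le_mul_integral_sq h12 (hg'.intervalIntegrable _ _)
          (hsq.intervalIntegrable _ _)
    _ ≤ (b - a) * ∫ s in a..b, g' s ^ 2 := by
        gcongr
        · exact intervalIntegral.integral_nonneg h12 fun s _ => sq_nonneg _
        · linarith
        · exact integral_mono_interval ha h12 hb (.of_forall fun s => sq_nonneg _)
            (hsq.intervalIntegrable _ _)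

theorem integral_integral_shear_eq_of_periodic {F : ℝ × ℝ → ℝ} (hF : Continuous F) {T : ℝ}
    (hper : ∀ t θ, F (t, θ + T) = F (t, θ)) (a : ℝ) {R : ℝ} (hR : R ≠ 0) :
    ∫ c in (0:ℝ)..T, ∫ s in (0:ℝ)..1, F (R * s, c - a * s) =
      R⁻¹ * ∫ t in (0:ℝ)..R, ∫ θ in (0:ℝ)..T, F (t, θ) := by
  have hint : IntegrableOn (Function.uncurry fun c s => F (R * s, c - a * s))
      (Set.uIoc 0 T ×ˢ Set.uIoc 0 1) := by
    have hcont : Continuous (Function.uncurry fun c s => F (R * s, c - a * s)) :=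
      hF.comp (by fun_prop)
    exact (hcont.continuousOn.integrableOn_compact (isCompact_uIcc.prod isCompact_uIcc)).mono_set
      (Set.prod_mono Set.uIoc_subset_uIcc Set.uIoc_subset_uIcc)
  have hshift : ∀ s, ∫ c in (0:ℝ)..T, F (R * s, c - a * s) = ∫ θ in (0:ℝ)..T, F (R * s, θ) := by
    intro s
    have hperiodic : Function.Periodic (fun θ => F (R * s, θ)) T := hper _
    rw [integral_comp_sub_right (fun θ => F (R * s, θ)), show T - a * s = 0 - a * s + T by ring,
      hperiodic.intervalIntegral_add_eq _ 0, zero_add]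
  rw [intervalIntegral_intervalIntegral_swap hint]
  simp_rw [hshift]
  rw [integral_comp_mul_left (fun t => ∫ θ in (0:ℝ)..T, F (t, θ)) hR, mul_zero, mul_one,
    smul_eq_mul]

theorem hasDerivAt_comp_diagonal {f : ℝ × ℝ → ℝ} (hf : Differentiable ℝ f) (a b c s : ℝ) :
    HasDerivAt (fun s => f (a * s, c - b * s)) (fderiv ℝ f (a * s, c - b * s) (a, -b)) s := by
  have ha : HasDerivAt (fun s : ℝ => a * s) a s := by
    simpa using (hasDerivAt_id s).const_mul a
  have hb : HasDerivAt (fun s : ℝ => c - b * s) (-b) s := by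
    simpa using ((hasDerivAt_id s).const_mul b).const_sub c
  exact (hf _).hasFDerivAt.comp_hasDerivAt s (ha.prodMk hb)

noncomputable def energyDensity (f : ℝ × ℝ → ℝ) (p : ℝ × ℝ) : ℝ :=
  (fderiv ℝ f p (1, 0)) ^ 2 + (fderiv ℝ f p (0, 1)) ^ 2

theorem continuous_energyDensity {f : ℝ × ℝ → ℝ} (hf : ContDiff ℝ 1 f) :
    Continuous (energyDensity f) := by
  have hdf := hf.continuous_fderiv one_ne_zero
  unfold energyDensity
  fun_prop

theorem energyDensity_add_period {f : ℝ × ℝ → ℝ} {T : ℝ}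
    (hf : ∀ t θ, f (t, θ + T) = f (t, θ)) (t θ : ℝ) :
    energyDensity f (t, θ + T) = energyDensity f (t, θ) := by
  have hshift : Function.Periodic f (0, T) := fun ⟨t, θ⟩ => by simp [hf]
  have := hshift.fderiv (𝕜 := ℝ) (t, θ)
  simp only [Prod.mk_add_mk, add_zero] at this
  simp only [energyDensity, this]

theorem sq_fderiv_apply_le_mul_energyDensity (f : ℝ × ℝ → ℝ) (p : ℝ × ℝ) (a b : ℝ) :
    fderiv ℝ f p (a, b) ^ 2 ≤ (a ^ 2 + b ^ 2) * energyDensity f p := by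
  set L := fderiv ℝ f p
  have hL : L (a, b) = a * L (1, 0) + b * L (0, 1) := by
    rw [← smul_eq_mul, ← smul_eq_mul, ← map_smul, ← map_smul, ← map_add]
    simp
  rw [energyDensity, hL]
  nlinarith [sq_nonneg (a * L (0, 1) - b * L (1, 0))]

theorem one_le_mul_integral_energyDensity_of_crossing {f : ℝ × ℝ → ℝ} (hf : ContDiff ℝ 1 f)
    (a b c : ℝ) {s₁ s₂ : ℝ} (h0 : 0 ≤ s₁) (h12 : s₁ ≤ s₂) (h21 : s₂ ≤ 1)
    (hjump : 1 ≤ |f (a * s₂, c - b * s₂) - f (a * s₁, c - b * s₁)|) :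
    1 ≤ (a ^ 2 + b ^ 2) * ∫ s in (0:ℝ)..1, energyDensity f (a * s, c - b * s) := by
  set g' : ℝ → ℝ := fun s => fderiv ℝ f (a * s, c - b * s) (a, -b)
  have hpath : Continuous fun s : ℝ => (a * s, c - b * s) := by fun_prop
  have hg' : Continuous g' :=
    ((hf.continuous_fderiv one_ne_zero).comp hpath).clm_apply continuous_const
  have hE : Continuous fun s => energyDensity f (a * s, c - b * s) :=
    (continuous_energyDensity hf).comp hpath
  rw [← intervalIntegral.integral_const_mul]
  calc (1 : ℝ) ≤ (f (a * s₂, c - b * s₂) - f (a * s₁, c - b * s₁)) ^ 2 := by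
        rw [← sq_abs]; nlinarith
    _ ≤ (1 - 0) * ∫ s in (0:ℝ)..1, g' s ^ 2 :=
        sq_sub_le_mul_integral_deriv_sq (hasDerivAt_comp_diagonal (hf.differentiable one_ne_zero)
          a b c) hg' h0 h12 h21
    _ ≤ ∫ s in (0:ℝ)..1, (a ^ 2 + b ^ 2) * energyDensity f (a * s, c - b * s) := by
        rw [sub_zero, one_mul]
        refine integral_mono_on zero_le_one ((hg'.pow 2).intervalIntegrable _ _)
          ((continuous_const.mul hE).intervalIntegrable _ _) fun s _ => ?_
        have := sq_fderiv_apply_le_mul_energyDensity f (a * s, c - b * s) a (-b)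
        rwa [neg_sq] at this

/-- Crossing estimate for diagonal paths on the flat cylinder `[0,R] × (ℝ/2πℤ)`
(functions on the cylinder are encoded as `2π`-periodic functions in the second
variable).  If along every diagonal path `γ_c(s) = (R s, c − 4π s)` the function `f`
varies by at least `1`, then the Dirichlet energy of `f` is at least
`2πR/(16π² + R²)`. -/
theorem crossing_estimate_diagonal (R : ℝ) (hR : 0 < R) (f : ℝ × ℝ → ℝ)
    (hf : ContDiff ℝ 1 f)
    (hper : ∀ t θ : ℝ, f (t, θ + 2 * π) = f (t, θ))
    (hcross : ∀ c : ℝ, ∃ s₁ s₂ : ℝ, 0 ≤ s₁ ∧ s₁ < s₂ ∧ s₂ ≤ 1 ∧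
      1 ≤ |f (R * s₂, c - 4 * π * s₂) - f (R * s₁, c - 4 * π * s₁)|) :
    2 * π * R / (16 * π ^ 2 + R ^ 2) ≤
      ∫ t in (0:ℝ)..R, ∫ θ in (0:ℝ)..(2 * π),
        (fderiv ℝ f (t, θ) (1, 0)) ^ 2 + (fderiv ℝ f (t, θ) (0, 1)) ^ 2 := by
  have hK : 16 * π ^ 2 + R ^ 2 = R ^ 2 + (4 * π) ^ 2 := by ring
  have hline (c : ℝ) : 1 ≤ (16 * π ^ 2 + R ^ 2) *
      ∫ s in (0:ℝ)..1, energyDensity f (R * s, c - 4 * π * s) := by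
    obtain ⟨s₁, s₂, h0, h12, h21, hjump⟩ := hcross c
    rw [hK]
    exact one_le_mul_integral_energyDensity_of_crossing hf R (4 * π) c h0 h12.le h21 hjump
  have havg : 2 * π ≤ (16 * π ^ 2 + R ^ 2) *
      (R⁻¹ * ∫ t in (0:ℝ)..R, ∫ θ in (0:ℝ)..(2 * π), energyDensity f (t, θ)) := by
    rw [← integral_integral_shear_eq_of_periodic (continuous_energyDensity hf)
      (energyDensity_add_period hper) (4 * π) hR.ne', ← intervalIntegral.integral_const_mul]
    calc 2 * π = ∫ _ in (0:ℝ)..(2 * π), (1 : ℝ) := by simp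
      _ ≤ _ := integral_mono_on (by positivity) intervalIntegrable_const
          (Continuous.intervalIntegrable (by have := continuous_energyDensity hf; fun_prop) _ _)
          fun c _ => hline c
  rw [div_le_iff₀ (by positivity)]
  change _ ≤ (∫ t in (0:ℝ)..R, ∫ θ in (0:ℝ)..(2 * π), energyDensity f (t, θ)) * _
  field_simp at havg
  linarith
end

section
/- There exists a universal constant C > 0 such that for every l > 0 and every θ₀ ∈ ℝ, ∫₀^{2l} ∫₀^{2π} |1 − e^{l−t} e^{i(θ−θ₀)}|^{−3/2} dθ dt ≤ C(l + 1); equivalently, the L^{3/2} norm of the kernel (t,θ) ↦ (1 − e^{l−t}e^{i(θ−θ₀)})^{−1} on [0,2l] × [0,2π] is at most (C(l+1))^{2/3}. -/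
/-! With `D = ‖1 - e^s e^{iφ}‖` one has `D² = (e^s - 1)² + 4 e^s sin² (φ/2)`. For `s ≥ -1` the two
terms are at least `(|s|/e)²` and `(|φ|/(eπ))²` on `|φ| ≤ π` (Jordan's inequality), so AM-GM gives
`D² ≳ |s| |φ|`; for `s ≤ -1` simply `D ≥ 1/2`. Hence `D^{-p} ≲ |s|^{-p/2} |φ|^{-p/2} + 1`, and for
`p < 2` both factors are integrable at `0`. Substituting `s = l - t ∈ [-l, l]` and, by periodicity,
`φ = θ - θ₀ ∈ [-π, π]`, the double integral is `≲ l^{1 - p/2} + l = O(l + 1)`. -/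

open Real MeasureTheory intervalIntegral

theorem intervalIntegrable_abs_rpow {r : ℝ} (hr : -1 < r) (a b : ℝ) :
    IntervalIntegrable (fun x : ℝ => |x| ^ r) volume a b := by
  have of_nonneg : ∀ c, 0 ≤ c → IntervalIntegrable (fun x : ℝ => |x| ^ r) volume 0 c :=
    fun c hc => (intervalIntegrable_rpow' hr).congr fun x hx => by
      rw [Set.uIoc_of_le hc] at hx
      simp only [abs_of_pos hx.1]
  have from_zero : ∀ c, IntervalIntegrable (fun x : ℝ => |x| ^ r) volume 0 c := fun c =>
    (le_total 0 c).elim (of_nonneg c) fun hc => by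
      simpa using (IntervalIntegrable.iff_comp_neg).mp (of_nonneg (-c) (by linarith))
  exact (from_zero a).symm.trans (from_zero b)

theorem integral_abs_rpow_symm {r : ℝ} (hr : -1 < r) {a : ℝ} (ha : 0 ≤ a) :
    ∫ x in -a..a, |x| ^ r = 2 * (a ^ (r + 1) / (r + 1)) := by
  have right_half : ∫ x in (0 : ℝ)..a, |x| ^ r = a ^ (r + 1) / (r + 1) := by
    have power := integral_rpow (a := 0) (b := a) (Or.inl hr)
    rw [zero_rpow (by linarith), sub_zero] at power
    rw [← power]
    refine integral_congr fun x hx => ?_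
    rw [Set.uIcc_of_le ha] at hx
    simp only [abs_of_nonneg hx.1]
  have left_half : ∫ x in -a..0, |x| ^ r = ∫ x in (0 : ℝ)..a, |x| ^ r := by
    simpa using (integral_comp_neg (a := 0) (b := a) fun x : ℝ => |x| ^ r).symm
  rw [← integral_add_adjacent_intervals (intervalIntegrable_abs_rpow hr _ _)
    (intervalIntegrable_abs_rpow hr _ _), left_half, right_half]
  ring

theorem intervalIntegral_mono_of_nonneg {f g : ℝ → ℝ} {a b : ℝ} (hab : a ≤ b)
    (hf : 0 ≤ᵐ[volume.restrict (Set.Ioc a b)] f) (hg : IntervalIntegrable g volume a b)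
    (h : f ≤ᵐ[volume.restrict (Set.Ioc a b)] g) :
    ∫ x in a..b, f x ≤ ∫ x in a..b, g x := by
  rw [integral_of_le hab, integral_of_le hab]
  exact integral_mono_of_nonneg hf hg.1 h

theorem rpow_le_add_one {x e : ℝ} (hx : 0 ≤ x) (he₀ : 0 ≤ e) (he₁ : e ≤ 1) :
    x ^ e ≤ x + 1 := by
  have := rpow_one_add_le_one_add_mul_self (s := x - 1) (by linarith) he₀ he₁
  rw [add_sub_cancel] at this
  nlinarith

noncomputable def cylinderKernel (p s φ : ℝ) : ℝ :=
  ‖1 - Complex.exp (s : ℂ) * Complex.exp (Complex.I * (φ : ℂ))‖ ^ (-p)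

theorem norm_one_sub_exp_mul_exp_I_sq (s φ : ℝ) :
    ‖1 - Complex.exp (s : ℂ) * Complex.exp (Complex.I * (φ : ℂ))‖ ^ 2
      = (rexp s - 1) ^ 2 + 4 * rexp s * sin (φ / 2) ^ 2 := by
  have hz : 1 - Complex.exp (s : ℂ) * Complex.exp (Complex.I * (φ : ℂ))
      = ((1 - rexp s * cos φ : ℝ) : ℂ) + ((-(rexp s * sin φ) : ℝ) : ℂ) * Complex.I := by
    rw [mul_comm Complex.I, Complex.exp_mul_I, ← Complex.ofReal_exp, ← Complex.ofReal_cos,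
      ← Complex.ofReal_sin]
    push_cast
    ring
  rw [hz, Complex.sq_norm, Complex.normSq_add_mul_I, sin_sq_eq_half_sub,
    mul_div_cancel₀ _ two_ne_zero]
  linear_combination rexp s ^ 2 * sin_sq_add_cos_sq φ

theorem exp_neg_one_mul_abs_le_abs_exp_sub_one {s : ℝ} (hs : -1 ≤ s) :
    rexp (-1) * |s| ≤ |rexp s - 1| := by
  have he : rexp (-1) ≤ 1 := exp_le_one_iff.mpr (by norm_num)
  rcases le_total 0 s with h | h
  · rw [abs_of_nonneg h, abs_of_nonneg (by linarith [add_one_le_exp s])]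
    nlinarith [add_one_le_exp s]
  · have key : -s * rexp s ≤ 1 - rexp s := by
      have h₁ := add_one_le_exp (-s)
      have h₂ : rexp (-s) * rexp s = 1 := by rw [← exp_add]; simp
      nlinarith [exp_pos s]
    rw [abs_of_nonpos h, abs_of_nonpos (by linarith [exp_le_one_iff.mpr h])]
    nlinarith [exp_le_exp.mpr hs]

theorem mul_abs_le_norm_one_sub_exp_mul_exp_I_sq {s φ : ℝ} (hs : -1 ≤ s) (hφ : |φ| ≤ π) :
    2 * rexp (-1) ^ 2 / π * (|s| * |φ|)
      ≤ ‖1 - Complex.exp (s : ℂ) * Complex.exp (Complex.I * (φ : ℂ))‖ ^ 2 := by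
  have hπ := pi_pos
  set ε := rexp (-1)
  have hε : 0 < ε := exp_pos _
  have hε1 : ε ≤ 1 := exp_le_one_iff.mpr (by norm_num)
  have hsin : |φ| / π ≤ |sin (φ / 2)| := by
    have := mul_abs_le_abs_sin (x := φ / 2) (by rw [abs_div, abs_two]; linarith)
    convert this using 1
    rw [abs_div, abs_two]
    ring
  have hexp : ε ≤ rexp s := exp_le_exp.mpr hs
  have radial : (ε * |s|) ^ 2 ≤ (rexp s - 1) ^ 2 := by
    rw [← sq_abs (rexp s - 1)]
    gcongr
    exact exp_neg_one_mul_abs_le_abs_exp_sub_one hs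
  have angular : (ε * (|φ| / π)) ^ 2 ≤ 4 * rexp s * sin (φ / 2) ^ 2 := by
    rw [← sq_abs (sin (φ / 2))]
    have hε4 : ε ^ 2 ≤ 4 * rexp s := by nlinarith
    calc (ε * (|φ| / π)) ^ 2 = ε ^ 2 * (|φ| / π) ^ 2 := by ring
      _ ≤ 4 * rexp s * |sin (φ / 2)| ^ 2 := by gcongr
  have amgm := two_mul_le_add_sq (ε * |s|) (ε * (|φ| / π))
  rw [norm_one_sub_exp_mul_exp_I_sq]
  calc 2 * ε ^ 2 / π * (|s| * |φ|) = 2 * (ε * |s|) * (ε * (|φ| / π)) := by ring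
    _ ≤ _ := by linarith

theorem quarter_le_norm_one_sub_exp_mul_exp_I_sq {s φ : ℝ} (hs : s ≤ -1) :
    1 / 4 ≤ ‖1 - Complex.exp (s : ℂ) * Complex.exp (Complex.I * (φ : ℂ))‖ ^ 2 := by
  have h2e : 2 ≤ rexp 1 := by linarith [add_one_le_exp 1]
  have : rexp s * 2 ≤ 1 := by
    calc rexp s * 2 ≤ rexp (-1) * rexp 1 := by gcongr
      _ = 1 := by rw [← exp_add]; norm_num
  rw [norm_one_sub_exp_mul_exp_I_sq]
  nlinarith [exp_pos s, sq_nonneg (sin (φ / 2))]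

theorem cylinderKernel_nonneg (p s φ : ℝ) : 0 ≤ cylinderKernel p s φ :=
  rpow_nonneg (norm_nonneg _) _

theorem cylinderKernel_le {p s φ : ℝ} (hp : 0 ≤ p) (hs : s ≠ 0) (hφ₀ : φ ≠ 0) (hφ : |φ| ≤ π) :
    cylinderKernel p s φ
      ≤ (2 * rexp (-1) ^ 2 / π) ^ (-(p / 2)) * |s| ^ (-(p / 2)) * |φ| ^ (-(p / 2))
        + (1 / 4) ^ (-(p / 2)) := by
  have hexp_nonpos : -(p / 2) ≤ 0 := by linarith
  have hsq : cylinderKernel p s φ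
      = (‖1 - Complex.exp (s : ℂ) * Complex.exp (Complex.I * (φ : ℂ))‖ ^ 2) ^ (-(p / 2)) := by
    rw [cylinderKernel, ← rpow_natCast, ← rpow_mul (norm_nonneg _)]
    ring_nf
  have hc : 0 < 2 * rexp (-1) ^ 2 / π := by positivity
  have hsφ : 0 < |s| * |φ| := by positivity
  rcases le_total (-1) s with hs₁ | hs₁
  · have near := rpow_le_rpow_of_nonpos (by positivity)
      (mul_abs_le_norm_one_sub_exp_mul_exp_I_sq hs₁ hφ) hexp_nonpos
    rw [← hsq, mul_rpow hc.le hsφ.le, mul_rpow (abs_nonneg _) (abs_nonneg _), ← mul_assoc]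
      at near
    linarith [rpow_nonneg (show (0 : ℝ) ≤ 1 / 4 by norm_num) (-(p / 2))]
  · have far := rpow_le_rpow_of_nonpos (by norm_num)
      (quarter_le_norm_one_sub_exp_mul_exp_I_sq (φ := φ) hs₁) hexp_nonpos
    rw [← hsq] at far
    have : 0 ≤ (2 * rexp (-1) ^ 2 / π) ^ (-(p / 2)) * |s| ^ (-(p / 2)) * |φ| ^ (-(p / 2)) := by
      positivity
    linarith

theorem cylinderKernel_periodic (p s : ℝ) : Function.Periodic (cylinderKernel p s) (2 * π) := by
  intro φ
  simp only [cylinderKernel]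
  push_cast
  rw [mul_add, Complex.exp_add, show Complex.I * (2 * π) = 2 * π * Complex.I by ring,
    Complex.exp_two_pi_mul_I, mul_one]

theorem integral_cylinderKernel_comp_sub (p s θ₀ : ℝ) :
    ∫ θ in (0 : ℝ)..2 * π, cylinderKernel p s (θ - θ₀) = ∫ φ in -π..π, cylinderKernel p s φ := by
  rw [integral_comp_sub_right, zero_sub]
  convert (cylinderKernel_periodic p s).intervalIntegral_add_eq (-θ₀) (-π) using 2 <;> ring

theorem exists_integral_cylinderKernel_le {p : ℝ} (hp₀ : 0 ≤ p) (hp₂ : p < 2) :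
    ∃ A B : ℝ, 0 ≤ A ∧ 0 < B ∧ ∀ s, s ≠ 0 →
      ∫ φ in -π..π, cylinderKernel p s φ ≤ A * |s| ^ (-(p / 2)) + B := by
  have hr : -1 < -(p / 2) := by linarith
  set c := (2 * rexp (-1) ^ 2 / π) ^ (-(p / 2))
  set J := ∫ φ in -π..π, |φ| ^ (-(p / 2))
  have hπ := pi_pos
  refine ⟨c * J, 2 * π * (1 / 4) ^ (-(p / 2)), ?_, by positivity, fun s hs => ?_⟩
  · have : 0 ≤ J := integral_nonneg (by linarith) fun φ _ => by positivity
    positivity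
  calc ∫ φ in -π..π, cylinderKernel p s φ
      ≤ ∫ φ in -π..π, (c * |s| ^ (-(p / 2)) * |φ| ^ (-(p / 2)) + (1 / 4) ^ (-(p / 2))) := by
        refine intervalIntegral_mono_of_nonneg (by linarith)
          (.of_forall fun φ => cylinderKernel_nonneg p s φ)
          (((intervalIntegrable_abs_rpow hr _ _).const_mul _).add intervalIntegrable_const) ?_
        filter_upwards [ae_restrict_mem measurableSet_Ioc, ae_restrict_of_ae (volume.ae_ne 0)]
          with φ hφ hφ₀
        exact cylinderKernel_le hp₀ hs hφ₀ (abs_le.mpr ⟨hφ.1.le, hφ.2⟩)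
    _ = c * J * |s| ^ (-(p / 2)) + 2 * π * (1 / 4) ^ (-(p / 2)) := by
        rw [integral_add ((intervalIntegrable_abs_rpow hr _ _).const_mul _)
          intervalIntegrable_const, intervalIntegral.integral_const_mul,
          intervalIntegral.integral_const, smul_eq_mul]
        ring

theorem exists_integral_integral_cylinderKernel_le {p : ℝ} (hp₀ : 0 ≤ p) (hp₂ : p < 2) :
    ∃ C : ℝ, 0 < C ∧ ∀ l : ℝ, 0 < l → ∀ θ₀ : ℝ,
      ∫ t in (0 : ℝ)..2 * l, ∫ θ in (0 : ℝ)..2 * π, cylinderKernel p (l - t) (θ - θ₀)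
        ≤ C * (l + 1) := by
  obtain ⟨A, B, hA, hB, hangular⟩ := exists_integral_cylinderKernel_le hp₀ hp₂
  have hr : -1 < -(p / 2) := by linarith
  have hr₁ : 0 < -(p / 2) + 1 := by linarith
  refine ⟨A * (2 / (-(p / 2) + 1)) + 2 * B, by positivity, fun l hl θ₀ => ?_⟩
  simp_rw [integral_cylinderKernel_comp_sub]
  rw [integral_comp_sub_left (fun s => ∫ φ in -π..π, cylinderKernel p s φ) l, sub_zero,
    show l - 2 * l = -l by ring]
  have hpow := rpow_le_add_one hl.le hr₁.le (by linarith)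
  calc ∫ s in -l..l, ∫ φ in -π..π, cylinderKernel p s φ
      ≤ ∫ s in -l..l, (A * |s| ^ (-(p / 2)) + B) := by
        refine intervalIntegral_mono_of_nonneg (by linarith)
          (.of_forall fun s => integral_nonneg (by linarith [pi_pos])
            fun φ _ => cylinderKernel_nonneg p s φ)
          (((intervalIntegrable_abs_rpow hr _ _).const_mul _).add intervalIntegrable_const) ?_
        filter_upwards [ae_restrict_of_ae (volume.ae_ne 0)] with s hs
        exact hangular s hs
    _ = A * (2 / (-(p / 2) + 1)) * l ^ (-(p / 2) + 1) + 2 * B * l := by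
        rw [integral_add ((intervalIntegrable_abs_rpow hr _ _).const_mul _)
          intervalIntegrable_const, intervalIntegral.integral_const_mul,
          integral_abs_rpow_symm hr hl.le, intervalIntegral.integral_const, smul_eq_mul]
        ring
    _ ≤ (A * (2 / (-(p / 2) + 1)) + 2 * B) * (l + 1) := by
        have : 0 ≤ A * (2 / (-(p / 2) + 1)) := by positivity
        nlinarith

/-- The `L^{3/2}` bound for the Cauchy kernel of the annulus `{1 ≤ |z| ≤ e^{2l}}`,
expressed in cylindrical coordinates and evaluated at the mid-cylinder point:
`∫₀^{2l} ∫₀^{2π} |1 − e^{l−t} e^{i(θ−θ₀)}|^{−3/2} dθ dt ≤ C (l+1)` for a universal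
constant `C > 0`. -/
theorem cauchy_kernel_L32_bound : ∃ C : ℝ, 0 < C ∧ ∀ l : ℝ, 0 < l → ∀ θ₀ : ℝ,
    (∫ t in (0:ℝ)..(2 * l), ∫ θ in (0:ℝ)..(2 * π),
        ‖1 - Complex.exp (((l - t : ℝ) : ℂ)) *
            Complex.exp (Complex.I * (((θ - θ₀ : ℝ)) : ℂ))‖ ^ (-(3/2) : ℝ))
      ≤ C * (l + 1) :=
  exists_integral_integral_cylinderKernel_le (p := 3 / 2) (by norm_num) (by norm_num)
end

section
/- Let R > 0, l > 0, δ > 0, and let V assign to every pair a ≤ b in [−R,R] a nonnegative real number V(a,b) such that (i) V(a,b) ≤ V(a′,b′) whenever [a,b] ⊆ [a′,b′] ⊆ [−R,R], and (ii) V(a,c) ≤ V(a,b) + V(b,c) whenever −R ≤ a ≤ b ≤ c ≤ R. Assume that V(a,a+l) ≤ (e^{−δl}/3) · V(a−l, a+2l) whenever [a−l, a+2l] ⊆ [−R,R]. Then for every natural number n ≥ 1, V(a,a+l) ≤ (e^{−nδl}/3) · V(a−nl, a+(n+1)l) whenever [a−nl, a+(n+1)l] ⊆ [−R,R]. -/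
open Real

/-- Iteration of the single-scale contraction of a variation-type quantity `V` on
`[−R,R]` (monotone under inclusion of intervals, subadditive under concatenation):
a one-step contraction with factor `e^{−δl}/3` propagates to an `n`-step
contraction with factor `e^{−nδl}/3`. -/
theorem variation_contraction_iterate (R l δ : ℝ) (hR : 0 < R) (hl : 0 < l)
    (hδ : 0 < δ) (V : ℝ → ℝ → ℝ)
    (hnonneg : ∀ a b : ℝ, -R ≤ a → a ≤ b → b ≤ R → 0 ≤ V a b)
    (hmono : ∀ a b a' b' : ℝ, -R ≤ a' → a' ≤ a → a ≤ b → b ≤ b' → b' ≤ R →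
      V a b ≤ V a' b')
    (hsub : ∀ a b c : ℝ, -R ≤ a → a ≤ b → b ≤ c → c ≤ R →
      V a c ≤ V a b + V b c)
    (hcontr : ∀ a : ℝ, -R ≤ a - l → a + 2 * l ≤ R →
      V a (a + l) ≤ Real.exp (-(δ * l)) / 3 * V (a - l) (a + 2 * l)) :
    ∀ n : ℕ, 1 ≤ n → ∀ a : ℝ, -R ≤ a - n * l → a + (n + 1) * l ≤ R →
      V a (a + l) ≤ Real.exp (-((n : ℝ) * δ * l)) / 3 *
        V (a - n * l) (a + (n + 1) * l) := by
  intro n hn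
  induction n, hn using Nat.le_induction with
  | base =>
    intro a h1 h2
    push_cast at h1 h2 ⊢
    have := hcontr a (by linarith) (by linarith)
    calc V a (a + l) ≤ Real.exp (-(δ * l)) / 3 * V (a - l) (a + 2 * l) := this
      _ = Real.exp (-(1 * δ * l)) / 3 * V (a - 1 * l) (a + (1 + 1) * l) := by
          ring_nf
  | succ n hn ih =>
    intro a h1 h2
    have hnl : (0:ℝ) ≤ (n:ℝ) * l := by positivity
    have hn1 : (1:ℝ) ≤ (n:ℝ) := by exact_mod_cast hn
    push_cast at h1 h2 ⊢
    -- basic interval facts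
    have hL : -R ≤ a - l := by nlinarith
    have hRr : a + 2 * l ≤ R := by nlinarith
    -- step 1: one-step contraction
    have step1 := hcontr a hL hRr
    -- step 2: subadditivity splitting [a-l, a+2l]
    have hsub1 : V (a - l) (a + 2 * l) ≤ V (a - l) a + V a (a + l) + V (a + l) (a + 2 * l) := by
      have h3 := hsub (a - l) (a + l) (a + 2 * l) hL (by linarith) (by linarith) hRr
      have h4 := hsub (a - l) a (a + l) hL (by linarith) (by linarith) (by linarith)
      linarith
    -- step 3: apply IH to each of the three unit intervals
    have big_nonneg : 0 ≤ V (a - (n + 1) * l) (a + (n + 1 + 1) * l) :=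
      hnonneg _ _ (by linarith) (by nlinarith) (by linarith)
    have key : ∀ b : ℝ, a - l ≤ b → b ≤ a + l →
        V b (b + l) ≤ Real.exp (-((n:ℝ) * δ * l)) / 3 *
          V (a - (n + 1) * l) (a + (n + 1 + 1) * l) := by
      intro b hb1 hb2
      have hb3 : -R ≤ b - (n:ℝ) * l := by linarith [show a - (n+1)*l ≤ b - (n:ℝ)*l by nlinarith]
      have hb4 : b + ((n:ℝ) + 1) * l ≤ R := by nlinarith
      have := ih b hb3 hb4
      refine this.trans ?_
      have hmo := hmono (b - (n:ℝ) * l) (b + ((n:ℝ) + 1) * l)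
        (a - ((n:ℝ) + 1) * l) (a + ((n:ℝ) + 1 + 1) * l)
        (by linarith) (by nlinarith) (by nlinarith) (by nlinarith) (by linarith)
      have hexp : (0:ℝ) < Real.exp (-((n:ℝ) * δ * l)) / 3 := by positivity
      exact mul_le_mul_of_nonneg_left hmo hexp.le
    have k1 := key (a - l) (le_refl _) (by linarith)
    have k2 := key a (by linarith) (by linarith)
    have k3 := key (a + l) (by linarith) (le_refl _)
    rw [show a - l + l = a by ring] at k1
    rw [show a + l + l = a + 2 * l by ring] at k3
    -- combine
    have hexp1 : (0:ℝ) < Real.exp (-(δ * l)) / 3 := by positivity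
    have comb : V (a - l) (a + 2 * l) ≤
        Real.exp (-((n:ℝ) * δ * l)) * V (a - (n + 1) * l) (a + (n + 1 + 1) * l) := by
      calc V (a - l) (a + 2 * l)
          ≤ V (a - l) a + V a (a + l) + V (a + l) (a + 2 * l) := hsub1
        _ ≤ 3 * (Real.exp (-((n:ℝ) * δ * l)) / 3 *
              V (a - (n + 1) * l) (a + (n + 1 + 1) * l)) := by linarith
        _ = Real.exp (-((n:ℝ) * δ * l)) * V (a - (n + 1) * l) (a + (n + 1 + 1) * l) := by
            ring
    calc V a (a + l) ≤ Real.exp (-(δ * l)) / 3 * V (a - l) (a + 2 * l) := step1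
      _ ≤ Real.exp (-(δ * l)) / 3 *
          (Real.exp (-((n:ℝ) * δ * l)) * V (a - (n + 1) * l) (a + (n + 1 + 1) * l)) :=
          mul_le_mul_of_nonneg_left comb hexp1.le
      _ = Real.exp (-(((n:ℝ) + 1) * δ * l)) / 3 *
          V (a - ((n:ℝ) + 1) * l) (a + ((n:ℝ) + 1 + 1) * l) := by
          have he : Real.exp (-(δ * l)) * Real.exp (-((n:ℝ) * δ * l)) =
              Real.exp (-(((n:ℝ) + 1) * δ * l)) := by
            rw [← Real.exp_add]; ring_nf
          rw [← he]; ring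
end

section
/- Let R > 0, l > 0, δ > 0, B ≥ 0, and let V assign to every pair a ≤ b in [−R,R] a nonnegative real number V(a,b) ≤ B such that (i) V(a,b) ≤ V(a′,b′) whenever [a,b] ⊆ [a′,b′] ⊆ [−R,R], and (ii) V(a,c) ≤ V(a,b) + V(b,c) whenever −R ≤ a ≤ b ≤ c ≤ R. Assume that V(a,a+l) ≤ (e^{−δl}/3) · V(a−l, a+2l) whenever [a−l, a+2l] ⊆ [−R,R]. Then V(a,a+l) ≤ B e^{2δl} e^{−δR} (e^{δa} + e^{−δa}) whenever [a,a+l] ⊆ [−R,R]. -/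
open Real

/-- Exponential interior decay of a bounded variation-type quantity `V` on `[−R,R]`
(monotone under inclusion, subadditive under concatenation, bounded by `B`)
satisfying the single-scale contraction with factor `e^{−δl}/3`:
`V(a, a+l) ≤ B e^{2δl} e^{−δR} (e^{δa} + e^{−δa})`. -/
theorem variation_exponential_decay (R l δ B : ℝ) (hR : 0 < R) (hl : 0 < l)
    (hδ : 0 < δ) (hB : 0 ≤ B) (V : ℝ → ℝ → ℝ)
    (hnonneg : ∀ a b : ℝ, -R ≤ a → a ≤ b → b ≤ R → 0 ≤ V a b)
    (hbdd : ∀ a b : ℝ, -R ≤ a → a ≤ b → b ≤ R → V a b ≤ B)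
    (hmono : ∀ a b a' b' : ℝ, -R ≤ a' → a' ≤ a → a ≤ b → b ≤ b' → b' ≤ R →
      V a b ≤ V a' b')
    (hsub : ∀ a b c : ℝ, -R ≤ a → a ≤ b → b ≤ c → c ≤ R →
      V a c ≤ V a b + V b c)
    (hcontr : ∀ a : ℝ, -R ≤ a - l → a + 2 * l ≤ R →
      V a (a + l) ≤ Real.exp (-(δ * l)) / 3 * V (a - l) (a + 2 * l)) :
    ∀ a : ℝ, -R ≤ a → a + l ≤ R →
      V a (a + l) ≤ B * Real.exp (2 * δ * l) * Real.exp (-(δ * R)) *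
        (Real.exp (δ * a) + Real.exp (-(δ * a))) := by
  -- iterated contraction
  have key : ∀ n : ℕ, ∀ a : ℝ, -R ≤ a - n * l → a + (n + 1) * l ≤ R →
      V a (a + l) ≤ Real.exp (-(n * (δ * l))) * B := by
    intro n
    induction n with
    | zero =>
      intro a h1 h2
      simp only [Nat.cast_zero, zero_mul, neg_zero, Real.exp_zero, one_mul] at *
      exact hbdd a (a + l) (by linarith) (by linarith) (by linarith)
    | succ n ih =>
      intro a h1 h2
      push_cast at h1 h2 ⊢
      have hnl : (0:ℝ) ≤ n * l := by positivity
      have hRa1 : -R ≤ a - l := by nlinarith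
      have hRa2 : a + 2 * l ≤ R := by nlinarith
      have step := hcontr a hRa1 hRa2
      have split1 : V (a - l) (a + 2 * l) ≤ V (a - l) a + V a (a + l) + V (a + l) (a + 2 * l) := by
        have h1' := hsub (a - l) a (a + 2 * l) hRa1 (by linarith) (by linarith) hRa2
        have h2' := hsub a (a + l) (a + 2 * l) (by linarith) (by linarith) (by linarith) hRa2
        linarith
      have ih1 : V (a - l) (a - l + l) ≤ Real.exp (-(n * (δ * l))) * B :=
        ih (a - l) (by push_cast; linarith) (by push_cast; linarith)
      have ih2 : V a (a + l) ≤ Real.exp (-(n * (δ * l))) * B :=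
        ih a (by push_cast; linarith) (by push_cast; linarith)
      have ih3 : V (a + l) (a + l + l) ≤ Real.exp (-(n * (δ * l))) * B :=
        ih (a + l) (by push_cast; linarith) (by push_cast; linarith)
      rw [show a - l + l = a by ring] at ih1
      rw [show a + l + l = a + 2 * l by ring] at ih3
      have hsum : V (a - l) (a + 2 * l) ≤ 3 * (Real.exp (-(n * (δ * l))) * B) := by
        linarith
      have hexp : (0:ℝ) < Real.exp (-(δ * l)) := Real.exp_pos _
      calc V a (a + l) ≤ Real.exp (-(δ * l)) / 3 * V (a - l) (a + 2 * l) := step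
        _ ≤ Real.exp (-(δ * l)) / 3 * (3 * (Real.exp (-(n * (δ * l))) * B)) := by
            apply mul_le_mul_of_nonneg_left hsum (by positivity)
        _ = Real.exp (-(δ * l)) * Real.exp (-(n * (δ * l))) * B := by ring
        _ = Real.exp (-((n + 1) * (δ * l))) * B := by
            rw [← Real.exp_add]; ring_nf
  intro a ha hb
  set m : ℝ := min (R + a) (R - a - l) with hm
  have hm0 : 0 ≤ m := le_min (by linarith) (by linarith)
  set n : ℕ := ⌊m / l⌋₊ with hn
  have hnle : (n : ℝ) * l ≤ m := by
    have := Nat.floor_le (by positivity : (0:ℝ) ≤ m / l)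
    calc (n : ℝ) * l ≤ m / l * l := by
          apply mul_le_mul_of_nonneg_right this hl.le
      _ = m := by field_simp
  have hnge : m / l - 1 ≤ (n : ℝ) := by
    have := Nat.lt_floor_add_one (m / l)
    linarith
  have h1 : -R ≤ a - n * l := by
    have : (n:ℝ) * l ≤ R + a := le_trans hnle (min_le_left _ _)
    linarith
  have h2 : a + (n + 1) * l ≤ R := by
    have : (n:ℝ) * l ≤ R - a - l := le_trans hnle (min_le_right _ _)
    push_cast
    linarith
  have hkey := key n a h1 h2
  -- bound exp(-(n δ l))
  have hexpb : Real.exp (-(n * (δ * l))) ≤ Real.exp (δ * l) * Real.exp (-(δ * m)) := by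
    rw [← Real.exp_add]
    apply Real.exp_le_exp.mpr
    have : m - l ≤ (n:ℝ) * l := by
      have : (m / l - 1) * l ≤ (n:ℝ) * l := mul_le_mul_of_nonneg_right hnge hl.le
      calc m - l = (m / l - 1) * l := by field_simp
        _ ≤ (n:ℝ) * l := this
    nlinarith
  have hmb : Real.exp (-(δ * m)) ≤ Real.exp (-(δ * (R + a))) + Real.exp (-(δ * (R - a - l))) := by
    rcases min_cases (R + a) (R - a - l) with ⟨h, _⟩ | ⟨h, _⟩
    · rw [hm, h]
      have := (Real.exp_pos (-(δ * (R - a - l)))).le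
      linarith
    · rw [hm, h]
      have := (Real.exp_pos (-(δ * (R + a)))).le
      linarith
  have e1 : Real.exp (-(δ * (R + a))) = Real.exp (-(δ * R)) * Real.exp (-(δ * a)) := by
    rw [← Real.exp_add]; ring_nf
  have e2 : Real.exp (-(δ * (R - a - l))) =
      Real.exp (δ * l) * Real.exp (-(δ * R)) * Real.exp (δ * a) := by
    rw [← Real.exp_add, ← Real.exp_add]; ring_nf
  have hone : (1:ℝ) ≤ Real.exp (δ * l) := Real.one_le_exp (by positivity)
  have hfinal : Real.exp (-(n * (δ * l))) * B ≤
      B * Real.exp (2 * δ * l) * Real.exp (-(δ * R)) *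
        (Real.exp (δ * a) + Real.exp (-(δ * a))) := by
    have c1 : Real.exp (-(n * (δ * l))) ≤
        Real.exp (δ * l) * (Real.exp (-(δ * (R + a))) + Real.exp (-(δ * (R - a - l)))) := by
      calc Real.exp (-(n * (δ * l))) ≤ Real.exp (δ * l) * Real.exp (-(δ * m)) := hexpb
        _ ≤ _ := mul_le_mul_of_nonneg_left hmb (Real.exp_pos _).le
    have c2 : Real.exp (δ * l) * (Real.exp (-(δ * (R + a))) + Real.exp (-(δ * (R - a - l)))) ≤
        Real.exp (2 * δ * l) * Real.exp (-(δ * R)) *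
          (Real.exp (δ * a) + Real.exp (-(δ * a))) := by
      rw [e1, e2, show (2:ℝ) * δ * l = δ * l + δ * l by ring, Real.exp_add]
      have p1 := (Real.exp_pos (δ * l)).le
      have p2 := (Real.exp_pos (-(δ * R))).le
      have p3 := (Real.exp_pos (δ * a)).le
      have p4 := (Real.exp_pos (-(δ * a))).le
      nlinarith [mul_nonneg p2 p4, mul_nonneg p2 p3, mul_nonneg (mul_nonneg p1 p2) p3,
        mul_nonneg (mul_nonneg p1 p2) p4]
    calc Real.exp (-(n * (δ * l))) * B ≤
        (Real.exp (2 * δ * l) * Real.exp (-(δ * R)) *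
          (Real.exp (δ * a) + Real.exp (-(δ * a)))) * B := by
          apply mul_le_mul_of_nonneg_right (le_trans c1 c2) hB
      _ = _ := by ring
  linarith
end

section
/- Let 0 < δ < δ′ < 1 and c > 0, B > 0. Then there exist l > 0 and C > 0, depending only on δ, δ′, c and B, with the following property: for every R > 0 and every function V : [−R,R] → [0,B] satisfying V(t) ≤ (1/(e^l − 1)) (V(t+l) + V(t−l)) + c(l+1) e^{δ′(l−R)} (e^{δ′t} + e^{−δ′t}) for all t with [t−l, t+l] ⊆ [−R,R], one has V(t) ≤ C e^{−δR} (e^{δt} + e^{−δt}) for all t ∈ [−R,R]. No continuity of V is assumed. -/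
/-!
The barrier `W t = C e^{-δR} (e^{δt} + e^{-δt})` is a supersolution of the recursion. Averaging
it over `t ± l` multiplies it by `2 cosh (δl)`, which the weight `1/(e^l - 1)` brings down to at
most `W t / 2` once `l` is large (this needs `δ < 1`). For `δ ≤ δ'` the inhomogeneous term is at
most `W t / 2` as soon as `C ≥ 2c(l+1)e^{δ'l}`, and near the ends, `|t| ≥ R - l`, one has
`W t ≥ C e^{-δl} ≥ B ≥ V t` once `C ≥ B e^{δl}`. A discrete maximum principle then gives `V ≤ W`:
wherever the recursion applies, `V - W` is at most `2/(e^l - 1) < 1` times its bound on the two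
neighbours, so iterating from the bound `B` gives `V - W ≤ B (2/(e^l - 1))^n → 0` pointwise.
No regularity of `V` enters.
-/

open Real Set Filter Topology

section MaximumPrinciple

variable {G : Type*} [AddGroup G] {s : Set G} {l : G} {a M : ℝ}

theorem nonpos_of_le_mul_neighbor_sum {E : G → ℝ} (ha : 0 ≤ a) (ha₁ : 2 * a < 1) (hM : 0 ≤ M)
    (hle : ∀ x ∈ s, E x ≤ M) (hedge : ∀ x ∈ s, ¬(x + l ∈ s ∧ x - l ∈ s) → E x ≤ 0)
    (hrec : ∀ x ∈ s, x + l ∈ s → x - l ∈ s → E x ≤ a * (E (x + l) + E (x - l))) :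
    ∀ x ∈ s, E x ≤ 0 := by
  have hpow : ∀ n : ℕ, ∀ x ∈ s, E x ≤ M * (2 * a) ^ n := by
    intro n
    induction n with
    | zero => simpa using hle
    | succ n ih =>
      intro x hx
      by_cases hin : x + l ∈ s ∧ x - l ∈ s
      · calc E x ≤ a * (E (x + l) + E (x - l)) := hrec x hx hin.1 hin.2
          _ ≤ a * (M * (2 * a) ^ n + M * (2 * a) ^ n) := by
            gcongr
            exacts [ih _ hin.1, ih _ hin.2]
          _ = M * (2 * a) ^ (n + 1) := by ring
      · exact (hedge x hx hin).trans (by positivity)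
  intro x hx
  have hlim : Tendsto (fun n : ℕ => M * (2 * a) ^ n) atTop (𝓝 0) := by
    simpa using (tendsto_pow_atTop_nhds_zero_of_lt_one (by positivity) ha₁).const_mul M
  exact ge_of_tendsto' hlim fun n => hpow n x hx

theorem le_of_le_mul_neighbor_sum_add {V W F : G → ℝ} (ha : 0 ≤ a) (ha₁ : 2 * a < 1)
    (hM : 0 ≤ M) (hle : ∀ x ∈ s, V x - W x ≤ M)
    (hedge : ∀ x ∈ s, ¬(x + l ∈ s ∧ x - l ∈ s) → V x ≤ W x)
    (hV : ∀ x ∈ s, x + l ∈ s → x - l ∈ s → V x ≤ a * (V (x + l) + V (x - l)) + F x)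
    (hW : ∀ x ∈ s, x + l ∈ s → x - l ∈ s → a * (W (x + l) + W (x - l)) + F x ≤ W x) :
    ∀ x ∈ s, V x ≤ W x := by
  have := nonpos_of_le_mul_neighbor_sum (E := V - W) ha ha₁ hM hle
    (fun x hx h => sub_nonpos.2 (hedge x hx h)) fun x hx h₁ h₂ => by
      have := hV x hx h₁ h₂
      have := hW x hx h₁ h₂
      simp only [Pi.sub_apply]
      linarith
  exact fun x hx => sub_nonpos.1 (this x hx)

end MaximumPrinciple

theorem cosh_le_exp_abs (x : ℝ) : cosh x ≤ exp |x| := by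
  rw [← cosh_abs, cosh_eq]
  have : exp (-|x|) ≤ exp |x| := exp_le_exp.2 (by linarith [abs_nonneg x])
  linarith

theorem exists_pos_four_mul_cosh_add_one_le_exp {δ : ℝ} (hδ : |δ| < 1) :
    ∃ l > 0, 4 * cosh (δ * l) + 1 ≤ exp l := by
  have hgap : 0 < 1 - |δ| := by linarith
  set l := log 5 / (1 - |δ|)
  have hl : 0 < l := div_pos (log_pos (by norm_num)) hgap
  have hexp : exp l = 5 * exp (|δ| * l) := by
    rw [← exp_log (show (0 : ℝ) < 5 by norm_num), ← exp_add]
    congr 1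
    linear_combination div_mul_cancel₀ (log 5) hgap.ne'
  refine ⟨l, hl, ?_⟩
  have hcosh : cosh (δ * l) ≤ exp (|δ| * l) := by
    simpa [abs_mul, abs_of_pos hl] using cosh_le_exp_abs (δ * l)
  have hone : 1 ≤ exp (|δ| * l) := one_le_exp (by positivity)
  linarith

noncomputable def twoEndDecay (δ R t : ℝ) : ℝ := exp (δ * (t - R)) + exp (-(δ * (t + R)))

section TwoEndDecay

variable {δ δ' R l t : ℝ}

theorem twoEndDecay_eq (δ R t : ℝ) :
    twoEndDecay δ R t = exp (-(δ * R)) * (exp (δ * t) + exp (-(δ * t))) := by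
  simp only [twoEndDecay, mul_add, ← exp_add]
  ring_nf

theorem twoEndDecay_nonneg (δ R t : ℝ) : 0 ≤ twoEndDecay δ R t := by
  unfold twoEndDecay; positivity

theorem twoEndDecay_add_add_sub (δ R t l : ℝ) :
    twoEndDecay δ R (t + l) + twoEndDecay δ R (t - l) = 2 * cosh (δ * l) * twoEndDecay δ R t := by
  simp only [twoEndDecay, cosh_eq, mul_add, mul_sub, neg_add, exp_add, exp_sub, exp_neg]
  field_simp
  ring

theorem twoEndDecay_le_of_le (hδ : δ ≤ δ') (ht : t ∈ Icc (-R) R) :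
    twoEndDecay δ' R t ≤ twoEndDecay δ R t := by
  obtain ⟨ht₁, ht₂⟩ := ht
  unfold twoEndDecay
  exact add_le_add (exp_le_exp.2 (by nlinarith)) (exp_le_exp.2 (by nlinarith))

theorem exp_neg_le_twoEndDecay (hδ : 0 ≤ δ) (ht : R - l ≤ t ∨ t ≤ l - R) :
    exp (-(δ * l)) ≤ twoEndDecay δ R t := by
  unfold twoEndDecay
  rcases ht with ht | ht
  · exact le_add_of_le_of_nonneg (exp_le_exp.2 (by nlinarith)) (exp_pos _).le
  · exact le_add_of_nonneg_of_le (exp_pos _).le (exp_le_exp.2 (by nlinarith))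

theorem exp_mul_sub_mul_exp_add_exp_neg (δ R t l : ℝ) :
    exp (δ * (l - R)) * (exp (δ * t) + exp (-(δ * t))) = exp (δ * l) * twoEndDecay δ R t := by
  rw [twoEndDecay_eq, mul_sub, sub_eq_add_neg, exp_add, mul_assoc]

theorem le_mul_twoEndDecay {B C : ℝ} (hδ : 0 ≤ δ) (hB : 0 ≤ B) (hBC : B * exp (δ * l) ≤ C)
    (ht : R - l ≤ t ∨ t ≤ l - R) : B ≤ C * twoEndDecay δ R t :=
  calc B = B * exp (δ * l) * exp (-(δ * l)) := by
        rw [mul_assoc, ← exp_add, add_neg_cancel, exp_zero, mul_one]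
    _ ≤ C * exp (-(δ * l)) := by gcongr
    _ ≤ C * twoEndDecay δ R t := by
      have hC : 0 ≤ C := (mul_nonneg hB (exp_pos _).le).trans hBC
      gcongr
      exact exp_neg_le_twoEndDecay hδ ht

theorem twoEndDecay_supersolution {a C K : ℝ} (hδ : δ ≤ δ')
    (ha : 4 * a * cosh (δ * l) ≤ 1) (hK : 0 ≤ K) (hKC : 2 * K ≤ C) (ht : t ∈ Icc (-R) R) :
    a * (C * twoEndDecay δ R (t + l) + C * twoEndDecay δ R (t - l)) + K * twoEndDecay δ' R t ≤
      C * twoEndDecay δ R t := by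
  rw [← mul_add, twoEndDecay_add_add_sub]
  have hD := twoEndDecay_nonneg δ R t
  have hCD : 0 ≤ C * twoEndDecay δ R t := mul_nonneg (by linarith) hD
  have hKD : K * twoEndDecay δ' R t ≤ K * twoEndDecay δ R t :=
    mul_le_mul_of_nonneg_left (twoEndDecay_le_of_le hδ ht) hK
  have hKCD : K * twoEndDecay δ R t ≤ C / 2 * twoEndDecay δ R t :=
    mul_le_mul_of_nonneg_right (by linarith) hD
  nlinarith

end TwoEndDecay

/-- Discrete recursion lemma: given `0 < δ < δ′ < 1`, `c > 0`, `B > 0`, there are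
`l > 0` and `C > 0` such that for every `R > 0`, every function
`V : [−R,R] → [0,B]` satisfying the two-point averaging inequality
`V(t) ≤ (1/(e^l−1))(V(t+l)+V(t−l)) + c(l+1)e^{δ′(l−R)}(e^{δ′t}+e^{−δ′t})`
(whenever `[t−l,t+l] ⊆ [−R,R]`) satisfies
`V(t) ≤ C e^{−δR}(e^{δt}+e^{−δt})` on all of `[−R,R]`. -/
theorem discrete_recursion_decay (δ δ' c B : ℝ) (hδ : 0 < δ) (hδδ' : δ < δ')
    (hδ' : δ' < 1) (hc : 0 < c) (hB : 0 < B) :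
    ∃ l : ℝ, 0 < l ∧ ∃ C : ℝ, 0 < C ∧ ∀ R : ℝ, 0 < R → ∀ V : ℝ → ℝ,
      (∀ t : ℝ, -R ≤ t → t ≤ R → 0 ≤ V t ∧ V t ≤ B) →
      (∀ t : ℝ, -R ≤ t - l → t + l ≤ R →
        V t ≤ 1 / (Real.exp l - 1) * (V (t + l) + V (t - l)) +
          c * (l + 1) * Real.exp (δ' * (l - R)) *
            (Real.exp (δ' * t) + Real.exp (-(δ' * t)))) →
      ∀ t : ℝ, -R ≤ t → t ≤ R →
        V t ≤ C * Real.exp (-(δ * R)) *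
          (Real.exp (δ * t) + Real.exp (-(δ * t))) := by
  obtain ⟨l, hl, hgap⟩ :=
    exists_pos_four_mul_cosh_add_one_le_exp (abs_lt.2 ⟨by linarith, by linarith⟩ : |δ| < 1)
  set K := c * (l + 1) * exp (δ' * l)
  have hK : 0 ≤ K := by positivity
  refine ⟨l, hl, B * exp (δ * l) + 2 * K, by positivity, fun R _ V hV hrec t ht₁ ht₂ => ?_⟩
  set C := B * exp (δ * l) + 2 * K
  have hC : 0 < C := by positivity
  have ha : 4 ≤ exp l - 1 := by linarith [one_le_cosh (δ * l)]
  rw [mul_assoc, ← twoEndDecay_eq]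
  refine le_of_le_mul_neighbor_sum_add (s := Icc (-R) R) (l := l) (a := 1 / (exp l - 1))
    (V := V) (W := fun x => C * twoEndDecay δ R x) (F := fun x => K * twoEndDecay δ' R x)
    (div_nonneg zero_le_one (by linarith)) ?_ hB.le ?_ ?_ ?_ ?_ t ⟨ht₁, ht₂⟩
  · rw [mul_one_div, div_lt_one (by linarith)]
    linarith
  · intro x hx
    linarith [(hV x hx.1 hx.2).2, mul_nonneg hC.le (twoEndDecay_nonneg δ R x)]
  · intro x hx hin
    have hend : R - l ≤ x ∨ x ≤ l - R := by
      by_contra! h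
      exact hin ⟨⟨by linarith, by linarith⟩, ⟨by linarith, by linarith⟩⟩
    exact (hV x hx.1 hx.2).2.trans
      (le_mul_twoEndDecay hδ.le hB.le (le_add_of_nonneg_right (by positivity)) hend)
  · intro x _ hxl hxl'
    convert hrec x hxl'.1 hxl.2 using 2
    simp only [K, mul_assoc, exp_mul_sub_mul_exp_add_exp_neg]
  · intro x hx _ _
    refine twoEndDecay_supersolution hδδ'.le ?_ hK (le_add_of_nonneg_left (by positivity)) hx
    rw [mul_one_div, div_mul_eq_mul_div, div_le_one (by linarith)]
    linarith
end

section
/- Let R ≥ 0 and M > 0, and let f be holomorphic on the annulus {z ∈ ℂ : e^{−(R+1)} < |z| < e^{R+1}} with |f(z)| ≤ M throughout. Let a₀ := (1/2π) ∫₀^{2π} f(e^{iθ}) dθ (the constant Laurent coefficient of f). Then for every z with e^{−R} ≤ |z| ≤ e^{R}, |f(z) − a₀| ≤ (M/(e − 1)) · e^{−R} · (|z| + |z|^{−1}). -/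
/-!
For `ρ₁ < |z| < ρ₂` inside the annulus, Cauchy's formula (applied to the difference quotient
`dslope f z`, which is holomorphic on the whole annulus) writes `f z - a₀` as the circle average
of `z f(w) / (w - z)` over `|w| = ρ₂` minus that of `w f(w) / (w - z)` over `|w| = ρ₁`; here
`a₀` is the circle average of `f`, which does not depend on the radius. Bounding the two kernels
and letting `ρ₁, ρ₂` tend to the boundary radii `r₁ = e^{-(R+1)}`, `r₂ = e^{R+1}` gives
`|f z - a₀| ≤ M|z| / (r₂ - |z|) + M r₁ / (|z| - r₁)`, and for `e^{-R} ≤ |z| ≤ e^R` the two terms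
are at most `M e^{-R} |z| / (e - 1)` and `M e^{-R} |z|⁻¹ / (e - 1)`.
-/

open Real MeasureTheory intervalIntegral
open Set Metric Filter Topology

def annulus (r₁ r₂ : ℝ) : Set ℂ := {z | r₁ < ‖z‖ ∧ ‖z‖ < r₂}

section

variable {E : Type*} [NormedAddCommGroup E] [NormedSpace ℂ E] {f : ℂ → E}
  {r₁ r₂ ρ ρ₁ ρ₂ : ℝ} {c z : ℂ}

theorem isOpen_annulus : IsOpen (annulus r₁ r₂) :=
  (isOpen_lt continuous_const continuous_norm).inter (isOpen_lt continuous_norm continuous_const)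

theorem closedBall_diff_ball_subset_annulus (h₁ : r₁ < ρ₁) (h₂ : ρ₂ < r₂) :
    closedBall (0 : ℂ) ρ₂ \ ball 0 ρ₁ ⊆ annulus r₁ r₂ := by
  rintro w ⟨hw₂, hw₁⟩
  rw [mem_closedBall_zero_iff] at hw₂
  rw [mem_ball_zero_iff, not_lt] at hw₁
  exact ⟨h₁.trans_le hw₁, hw₂.trans_lt h₂⟩

theorem sphere_subset_annulus (h₁ : r₁ < ρ) (h₂ : ρ < r₂) : sphere (0 : ℂ) ρ ⊆ annulus r₁ r₂ :=
  fun _ hw => ⟨mem_sphere_zero_iff_norm.1 hw ▸ h₁, mem_sphere_zero_iff_norm.1 hw ▸ h₂⟩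

theorem DifferentiableOn.circleIntegral_eq_of_annulus (hf : DifferentiableOn ℂ f (annulus r₁ r₂))
    (h0 : 0 < ρ₁) (h₁ : r₁ < ρ₁) (hle : ρ₁ ≤ ρ₂) (h₂ : ρ₂ < r₂) :
    (∮ w in C(0, ρ₂), f w) = ∮ w in C(0, ρ₁), f w := by
  have hsub := closedBall_diff_ball_subset_annulus h₁ h₂
  refine Complex.circleIntegral_eq_of_differentiable_on_annulus_off_countable h0 hle
    countable_empty (hf.continuousOn.mono hsub) fun w hw => ?_
  exact hf.differentiableAt (isOpen_annulus.mem_nhds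
    (hsub ⟨ball_subset_closedBall hw.1.1, fun h => hw.1.2 (ball_subset_closedBall h)⟩))

theorem DifferentiableOn.circleAverage_eq_of_annulus [CompleteSpace E]
    (hf : DifferentiableOn ℂ f (annulus r₁ r₂)) (h0 : 0 ≤ r₁)
    (hρ₁ : ρ₁ ∈ Ioo r₁ r₂) (hρ₂ : ρ₂ ∈ Ioo r₁ r₂) :
    circleAverage f 0 ρ₁ = circleAverage f 0 ρ₂ := by
  wlog hle : ρ₁ ≤ ρ₂ generalizing ρ₁ ρ₂
  · exact (this hρ₂ hρ₁ (le_of_not_ge hle)).symm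
  have hpos : 0 < ρ₁ := h0.trans_lt hρ₁.1
  have hg : DifferentiableOn ℂ (fun w => (w - 0)⁻¹ • f w) (annulus r₁ r₂) :=
    ((differentiableOn_id.sub_const 0).inv fun w hw =>
      sub_ne_zero.2 (norm_pos_iff.1 (h0.trans_lt hw.1))).smul hf
  rw [circleAverage_eq_circleIntegral hpos.ne',
    circleAverage_eq_circleIntegral (hpos.trans_le hle).ne',
    hg.circleIntegral_eq_of_annulus hpos hρ₁.1 hle hρ₂.2]

theorem circleIntegral_sub_inv_eq_zero_of_lt_norm (hρ : 0 ≤ ρ) (hz : ρ < ‖z - c‖) :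
    (∮ w in C(c, ρ), (w - z)⁻¹) = 0 := by
  have hne : ∀ w ∈ closedBall c ρ, w - z ≠ 0 := fun w hw h => by
    rw [mem_closedBall, dist_eq_norm, sub_eq_zero.1 h] at hw
    exact hw.not_gt hz
  refine Complex.circleIntegral_eq_zero_of_differentiable_on_off_countable hρ countable_empty
    ((continuousOn_id.sub continuousOn_const).inv₀ hne) fun w hw => ?_
  exact (differentiableAt_id.sub_const z).inv (hne w (ball_subset_closedBall hw.1))

theorem circleIntegral_sub_inv_smul_eq_circleIntegral_dslope_add [CompleteSpace E] (hρ : 0 ≤ ρ)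
    (hz : z ∉ sphere c ρ) (hf : ContinuousOn f (sphere c ρ)) :
    (∮ w in C(c, ρ), (w - z)⁻¹ • f w) =
      (∮ w in C(c, ρ), dslope f z w) + (∮ w in C(c, ρ), (w - z)⁻¹) • f z := by
  have hne : ∀ w ∈ sphere c ρ, w ≠ z := fun w hw h => hz (h ▸ hw)
  have hinv : ContinuousOn (fun w => (w - z)⁻¹) (sphere c ρ) :=
    (continuousOn_id.sub continuousOn_const).inv₀ fun w hw => sub_ne_zero.2 (hne w hw)
  have hslope : (∮ w in C(c, ρ), dslope f z w) =
      ∮ w in C(c, ρ), ((w - z)⁻¹ • f w - (w - z)⁻¹ • f z) :=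
    circleIntegral.integral_congr hρ fun w hw => by
      rw [dslope_of_ne f (hne w hw), slope_def_module, smul_sub]
  have hint : CircleIntegrable (fun w => (w - z)⁻¹ • f w) c ρ :=
    (hinv.smul hf).circleIntegrable hρ
  have hint' : CircleIntegrable (fun w => (w - z)⁻¹ • f z) c ρ :=
    (hinv.smul continuousOn_const).circleIntegrable hρ
  rw [hslope, circleIntegral.integral_sub hint hint', circleIntegral.integral_smul_const,
    sub_add_cancel]

theorem DifferentiableOn.circleIntegral_sub_inv_smul_sub_of_annulus [CompleteSpace E]
    (hf : DifferentiableOn ℂ f (annulus r₁ r₂)) (h0 : 0 < ρ₁) (h₁ : r₁ < ρ₁)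
    (hz₁ : ρ₁ < ‖z‖) (hz₂ : ‖z‖ < ρ₂) (h₂ : ρ₂ < r₂) :
    (∮ w in C(0, ρ₂), (w - z)⁻¹ • f w) - (∮ w in C(0, ρ₁), (w - z)⁻¹ • f w) =
      (2 * π * Complex.I : ℂ) • f z := by
  have hz : z ∈ annulus r₁ r₂ := ⟨h₁.trans hz₁, hz₂.trans h₂⟩
  have hslope : DifferentiableOn ℂ (dslope f z) (annulus r₁ r₂) :=
    (Complex.differentiableOn_dslope (isOpen_annulus.mem_nhds hz)).2 hf
  have hρ₂ : 0 ≤ ρ₂ := (h0.trans (hz₁.trans hz₂)).le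
  rw [circleIntegral_sub_inv_smul_eq_circleIntegral_dslope_add hρ₂ (by simpa using hz₂.ne)
      (hf.continuousOn.mono (sphere_subset_annulus (h₁.trans (hz₁.trans hz₂)) h₂)),
    circleIntegral_sub_inv_smul_eq_circleIntegral_dslope_add h0.le (by simpa using hz₁.ne')
      (hf.continuousOn.mono (sphere_subset_annulus h₁ (hz₁.trans (hz₂.trans h₂)))),
    hslope.circleIntegral_eq_of_annulus h0 h₁ (hz₁.trans hz₂).le h₂,
    circleIntegral.integral_sub_inv_of_mem_ball (by simpa using hz₂),
    circleIntegral_sub_inv_eq_zero_of_lt_norm h0.le (by simpa using hz₁)]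
  simp

theorem circleAverage_div_sub_smul_eq_circleIntegral (hρ : 0 < ρ) :
    circleAverage (fun w => ((w - c) / (w - z)) • f w) c ρ =
      (2 * π * Complex.I)⁻¹ • ∮ w in C(c, ρ), (w - z)⁻¹ • f w := by
  rw [circleAverage_eq_circleIntegral hρ.ne']
  congr 1
  refine circleIntegral.integral_congr hρ.le fun w hw => ?_
  have hwc : w - c ≠ 0 := sub_ne_zero.2 (ne_of_mem_sphere hw hρ.ne')
  rw [smul_smul, div_eq_mul_inv, inv_mul_cancel_left₀ hwc]

theorem DifferentiableOn.circleAverage_div_sub_smul_sub_of_annulus [CompleteSpace E]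
    (hf : DifferentiableOn ℂ f (annulus r₁ r₂)) (h0 : 0 < ρ₁) (h₁ : r₁ < ρ₁)
    (hz₁ : ρ₁ < ‖z‖) (hz₂ : ‖z‖ < ρ₂) (h₂ : ρ₂ < r₂) :
    circleAverage (fun w => (w / (w - z)) • f w) 0 ρ₂ -
      circleAverage (fun w => (w / (w - z)) • f w) 0 ρ₁ = f z := by
  have hcauchy (ρ : ℝ) (hρ : 0 < ρ) : circleAverage (fun w => (w / (w - z)) • f w) 0 ρ =
      (2 * π * Complex.I)⁻¹ • ∮ w in C(0, ρ), (w - z)⁻¹ • f w := by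
    simpa using circleAverage_div_sub_smul_eq_circleIntegral (c := 0) (f := f) (z := z) hρ
  rw [hcauchy ρ₂ (h0.trans (hz₁.trans hz₂)), hcauchy ρ₁ h0, ← smul_sub,
    hf.circleIntegral_sub_inv_smul_sub_of_annulus h0 h₁ hz₁ hz₂ h₂, inv_smul_smul₀]
  simp [pi_ne_zero]

theorem norm_circleAverage_le_of_norm_le {C R : ℝ} (hf : ∀ w ∈ sphere c |R|, ‖f w‖ ≤ C) :
    ‖circleAverage f c R‖ ≤ C :=
  calc ‖circleAverage f c R‖ = (2 * π)⁻¹ * ‖∫ θ in 0..2 * π, f (circleMap c R θ)‖ := by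
        rw [circleAverage_def, norm_smul, norm_inv, Real.norm_of_nonneg two_pi_pos.le]
    _ ≤ (2 * π)⁻¹ * (C * |2 * π - 0|) := by
        gcongr
        exact norm_integral_le_of_norm_le_const fun θ _ => hf _ (circleMap_mem_sphere' c R θ)
    _ = C := by rw [sub_zero, abs_of_pos two_pi_pos]; field_simp

theorem norm_div_sub_smul_le {a w : ℂ} {x : E} {M d : ℝ} (hx : ‖x‖ ≤ M) (hd : 0 < d)
    (hwz : d ≤ ‖w - z‖) : ‖(a / (w - z)) • x‖ ≤ ‖a‖ * M / d := by
  rw [norm_smul, norm_div, mul_div_right_comm]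
  exact mul_le_mul (div_le_div_of_nonneg_left (norm_nonneg a) hd hwz) hx (norm_nonneg x)
    (div_nonneg (norm_nonneg a) hd.le)

theorem DifferentiableOn.norm_sub_circleAverage_le_of_radii [CompleteSpace E] {M : ℝ}
    (hf : DifferentiableOn ℂ f (annulus r₁ r₂)) (hM : ∀ w ∈ annulus r₁ r₂, ‖f w‖ ≤ M)
    (h0 : 0 < ρ₁) (h₁ : r₁ < ρ₁) (hz₁ : ρ₁ < ‖z‖) (hz₂ : ‖z‖ < ρ₂) (h₂ : ρ₂ < r₂) :
    ‖f z - circleAverage f 0 ρ₂‖ ≤ ‖z‖ * M / (ρ₂ - ‖z‖) + ρ₁ * M / (‖z‖ - ρ₁) := by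
  have hρ₂ : 0 < ρ₂ := h0.trans (hz₁.trans hz₂)
  have hsphere₂ := sphere_subset_annulus (h₁.trans (hz₁.trans hz₂)) h₂
  have hsphere₁ := sphere_subset_annulus h₁ (hz₁.trans (hz₂.trans h₂))
  have hwz : ∀ w ∈ sphere (0 : ℂ) ρ₂, w - z ≠ 0 := fun w hw h => by
    rw [mem_sphere_zero_iff_norm, sub_eq_zero.1 h] at hw
    exact hz₂.ne hw
  have hint : CircleIntegrable (fun w => (w / (w - z)) • f w) 0 ρ₂ :=
    ((continuousOn_id.div (continuousOn_id.sub continuousOn_const) hwz).smul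
      (hf.continuousOn.mono hsphere₂)).circleIntegrable hρ₂.le
  have hsplit : f z - circleAverage f 0 ρ₂ =
      circleAverage (fun w => (z / (w - z)) • f w) 0 ρ₂ -
        circleAverage (fun w => (w / (w - z)) • f w) 0 ρ₁ := by
    rw [← hf.circleAverage_div_sub_smul_sub_of_annulus h0 h₁ hz₁ hz₂ h₂, sub_right_comm,
      ← circleAverage_fun_sub hint ((hf.continuousOn.mono hsphere₂).circleIntegrable hρ₂.le)]
    congr 1
    refine circleAverage_congr_sphere fun w hw => ?_
    rw [abs_of_pos hρ₂] at hw
    have hcoeff : z / (w - z) = w / (w - z) - 1 := by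
      rw [div_sub_one (hwz w hw), sub_sub_cancel]
    rw [hcoeff, sub_smul, one_smul]
  rw [hsplit]
  refine (norm_sub_le _ _).trans (add_le_add ?_ ?_)
  · refine norm_circleAverage_le_of_norm_le fun w hw => ?_
    rw [abs_of_pos hρ₂] at hw
    exact norm_div_sub_smul_le (hM w (hsphere₂ hw)) (sub_pos.2 hz₂)
      (by simpa [mem_sphere_zero_iff_norm.1 hw] using norm_sub_norm_le w z)
  · refine norm_circleAverage_le_of_norm_le fun w hw => ?_
    rw [abs_of_pos h0] at hw
    have hw' := mem_sphere_zero_iff_norm.1 hw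
    rw [← hw']
    refine norm_div_sub_smul_le (hM w (hsphere₁ hw)) (by rwa [hw', sub_pos]) ?_
    rw [norm_sub_rev]
    exact norm_sub_norm_le z w

theorem DifferentiableOn.norm_sub_circleAverage_le [CompleteSpace E] {M : ℝ}
    (hf : DifferentiableOn ℂ f (annulus r₁ r₂)) (hM : ∀ w ∈ annulus r₁ r₂, ‖f w‖ ≤ M)
    (h0 : 0 ≤ r₁) (hρ : ρ ∈ Ioo r₁ r₂) (hz : z ∈ annulus r₁ r₂) :
    ‖f z - circleAverage f 0 ρ‖ ≤ ‖z‖ * M / (r₂ - ‖z‖) + r₁ * M / (‖z‖ - r₁) := by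
  have hbound : Tendsto (fun p : ℝ × ℝ => ‖z‖ * M / (p.2 - ‖z‖) + p.1 * M / (‖z‖ - p.1))
      (𝓝[>] r₁ ×ˢ 𝓝[<] r₂) (𝓝 (‖z‖ * M / (r₂ - ‖z‖) + r₁ * M / (‖z‖ - r₁))) := by
    have hcont : ContinuousAt (fun p : ℝ × ℝ => ‖z‖ * M / (p.2 - ‖z‖) + p.1 * M / (‖z‖ - p.1))
        (r₁, r₂) := by
      fun_prop (disch := simp only; linarith [hz.1, hz.2])
    refine hcont.tendsto.mono_left ?_
    rw [nhds_prod_eq]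
    exact prod_mono nhdsWithin_le_nhds nhdsWithin_le_nhds
  refine ge_of_tendsto hbound ?_
  filter_upwards [prod_mem_prod (Ioo_mem_nhdsGT hz.1) (Ioo_mem_nhdsLT hz.2)]
    with ⟨ρ₁, ρ₂⟩ ⟨hρ₁, hρ₂⟩
  rw [hf.circleAverage_eq_of_annulus h0 hρ ⟨hz.1.trans hρ₂.1, hρ₂.2⟩]
  exact hf.norm_sub_circleAverage_le_of_radii hM (h0.trans_lt hρ₁.1) hρ₁.1 hρ₁.2 hρ₂.1 hρ₂.2

end

theorem mul_div_exp_add_one_sub_le {R a M : ℝ} (ha : 0 ≤ a) (haR : a ≤ exp R) (hM : 0 ≤ M) :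
    a * M / (exp (R + 1) - a) ≤ M / (exp 1 - 1) * exp (-R) * a := by
  have he : 0 < exp 1 - 1 := by linarith [add_one_lt_exp one_ne_zero]
  have hgap : exp R * (exp 1 - 1) ≤ exp (R + 1) - a := by rw [exp_add]; linarith
  calc a * M / (exp (R + 1) - a) ≤ a * M / (exp R * (exp 1 - 1)) :=
        div_le_div_of_nonneg_left (by positivity) (by positivity) hgap
    _ = M / (exp 1 - 1) * exp (-R) * a := by rw [exp_neg]; field_simp

theorem exp_neg_mul_div_sub_le {R a M : ℝ} (haR : exp (-R) ≤ a) (hM : 0 ≤ M) :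
    exp (-(R + 1)) * M / (a - exp (-(R + 1))) ≤ M / (exp 1 - 1) * exp (-R) * a⁻¹ := by
  have he : 0 < exp 1 - 1 := by linarith [add_one_lt_exp one_ne_zero]
  have ha : 0 < a := (exp_pos _).trans_le haR
  have hsplit : exp (-(R + 1)) = exp (-R) / exp 1 := by
    rw [neg_add, exp_add, exp_neg 1, div_eq_mul_inv]
  have hgap : a * (exp 1 - 1) / exp 1 ≤ a - exp (-(R + 1)) := by
    rw [hsplit, le_sub_iff_add_le, ← add_div, div_le_iff₀ (exp_pos 1)]
    nlinarith
  calc exp (-(R + 1)) * M / (a - exp (-(R + 1)))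
        ≤ exp (-(R + 1)) * M / (a * (exp 1 - 1) / exp 1) :=
        div_le_div_of_nonneg_left (by positivity) (by positivity) hgap
    _ = M / (exp 1 - 1) * exp (-R) * a⁻¹ := by rw [hsplit]; field_simp

theorem circleAverage_zero_one_eq_integral (f : ℂ → ℂ) :
    circleAverage f 0 1 =
      1 / (2 * (π : ℂ)) * ∫ θ in (0:ℝ)..(2 * π), f (Complex.exp ((θ : ℂ) * Complex.I)) := by
  simp [circleAverage_def, circleMap, Complex.real_smul]

/-- Interior oscillation decay for bounded holomorphic functions on the annulus
`{e^{−(R+1)} < |z| < e^{R+1}}`: with `a₀` the constant Laurent coefficient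
(the average of `f` over the unit circle), on the sub-annulus
`{e^{−R} ≤ |z| ≤ e^{R}}` one has
`|f(z) − a₀| ≤ (M/(e−1)) e^{−R} (|z| + |z|⁻¹)`. -/
theorem bounded_holomorphic_annulus_oscillation (R M : ℝ) (hR : 0 ≤ R)
    (hM : 0 < M) (f : ℂ → ℂ)
    (hf : DifferentiableOn ℂ f
      {z : ℂ | Real.exp (-(R + 1)) < ‖z‖ ∧
        ‖z‖ < Real.exp (R + 1)})
    (hbdd : ∀ z : ℂ, Real.exp (-(R + 1)) < ‖z‖ →
      ‖z‖ < Real.exp (R + 1) → ‖f z‖ ≤ M) :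
    ∀ z : ℂ, Real.exp (-R) ≤ ‖z‖ → ‖z‖ ≤ Real.exp R →
      ‖f z - (1 / (2 * (π : ℂ))) *
          ∫ θ in (0:ℝ)..(2 * π), f (Complex.exp ((θ : ℂ) * Complex.I))‖ ≤
        (M / (Real.exp 1 - 1)) * Real.exp (-R) *
          (‖z‖ + (‖z‖)⁻¹) := by
  intro z hz₁ hz₂
  have hunit : (1 : ℝ) ∈ Ioo (exp (-(R + 1))) (exp (R + 1)) :=
    ⟨exp_lt_one_iff.2 (by linarith), one_lt_exp_iff.2 (by linarith)⟩
  have hz : z ∈ annulus (exp (-(R + 1))) (exp (R + 1)) :=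
    ⟨(exp_lt_exp.2 (by linarith)).trans_le hz₁, hz₂.trans_lt (exp_lt_exp.2 (by linarith))⟩
  rw [← circleAverage_zero_one_eq_integral]
  calc _ ≤ ‖z‖ * M / (exp (R + 1) - ‖z‖) + exp (-(R + 1)) * M / (‖z‖ - exp (-(R + 1))) :=
        hf.norm_sub_circleAverage_le (fun w hw => hbdd w hw.1 hw.2) (exp_pos _).le hunit hz
    _ ≤ M / (exp 1 - 1) * exp (-R) * ‖z‖ + M / (exp 1 - 1) * exp (-R) * ‖z‖⁻¹ :=
        add_le_add (mul_div_exp_add_one_sub_le (norm_nonneg z) hz₂ hM.le)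
          (exp_neg_mul_div_sub_le hz₁ hM.le)
    _ = _ := by ring
end
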